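/- arXiv:2205.07248 — 3 statements merged into one kernel-verified Lean document; each statement's English description precedes it below -/
import Mathlib

section
/- Let G be a BSP-group which is a 2-group (every element of G has order a power of 2). Then G is a finite group. -/
/-- A group `G` is a BSP-group if every element has prime power order and, for each prime
`p` dividing the order of some element of `G`, there is a positive integer `v` such that
every finite `p`-subgroup of `G` has order at most `p ^ v`. -/
def IsBSPGroup (G : Type*) [Group G] : Prop :=
  (∀ g : G, ∃ p k : ℕ, p.Prime ∧ orderOf g = p ^ k) ∧
  ∀ p : ℕ, p.Prime → (∃ g : G, p ∣ orderOf g) →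
    ∃ v : ℕ, 0 < v ∧ ∀ H : Subgroup G, Finite H → IsPGroup p H → Nat.card H ≤ p ^ v

open Subgroup

lemma order_two_of_pow {G : Type*} [Group G] {g : G} {k : ℕ}
    (hg : g ≠ 1) (hk : orderOf g = 2 ^ k) : orderOf (g ^ 2 ^ (k - 1)) = 2 := by
  have hk1 : 1 ≤ k := by
    rcases Nat.eq_zero_or_pos k with h | h
    · exfalso; apply hg; rw [← orderOf_eq_one_iff, hk, h, pow_zero]
    · exact h
  have hmul : 2 ^ (k - 1) * 2 = 2 ^ k := by
    rw [← pow_succ]; congr 1; omega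
  have hsq : (g ^ 2 ^ (k - 1)) ^ 2 = 1 := by
    rw [← pow_mul, hmul, ← hk, pow_orderOf_eq_one]
  have hne : g ^ 2 ^ (k - 1) ≠ 1 := by
    intro h
    have hd := orderOf_dvd_of_pow_eq_one h
    rw [hk] at hd
    have hle := Nat.le_of_dvd (Nat.pow_pos (by norm_num)) hd
    have hlt : (2:ℕ) ^ (k - 1) < 2 ^ k := Nat.pow_lt_pow_right (by norm_num) (by omega)
    omega
  exact orderOf_eq_prime hsq hne

universe u

lemma key : ∀ (v : ℕ) (G : Type u) [Group G],
    (∀ g : G, ∃ k : ℕ, orderOf g = 2 ^ k) →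
    (∀ H : Subgroup G, Finite H → Nat.card H ≤ 2 ^ v) → Finite G := by
  intro v
  induction v with
  | zero =>
    intro G _ hord hbd
    have htriv : ∀ g : G, g = 1 := by
      intro g
      obtain ⟨k, hk⟩ := hord g
      have hfin : Finite (zpowers g) := by
        apply Nat.finite_of_card_ne_zero
        rw [Nat.card_zpowers, hk]
        positivity
      have := hbd (zpowers g) hfin
      rw [Nat.card_zpowers, hk, pow_zero] at this
      rw [← orderOf_eq_one_iff, hk]
      have : (2:ℕ) ^ k ≥ 1 := Nat.one_le_two_pow
      omega
    haveI : Subsingleton G := ⟨fun a b => (htriv a).trans (htriv b).symm⟩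
    exact Finite.of_subsingleton
  | succ v ih =>
    intro G _ hord hbd
    -- Step (a): every involution has finite centralizer
    have hcent : ∀ s : G, orderOf s = 2 → Finite (centralizer ({s} : Set G) : Subgroup G) := by
      intro s hs
      set C := centralizer ({s} : Set G) with hC
      have hsC : s ∈ C := mem_centralizer_iff.mpr (by rintro g rfl; rfl)
      set σ : C := ⟨s, hsC⟩ with hσdef
      have hσ : orderOf σ = 2 := by
        rw [← hs]
        exact (orderOf_injective C.subtype C.subtype_injective σ).symm
      have hσcomm : ∀ c : C, Commute σ c := by
        intro c
        have h := mem_centralizer_iff.mp c.2 s rfl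
        exact Subtype.ext h
      set Z := zpowers σ with hZ
      haveI hZn : Z.Normal := by
        constructor
        intro n hn g
        obtain ⟨m, rfl⟩ := mem_zpowers_iff.mp hn
        have hcz : σ ^ m * g = g * σ ^ m := ((hσcomm g).zpow_left m).eq
        have : g * σ ^ m * g⁻¹ = σ ^ m := by rw [← hcz, mul_inv_cancel_right]
        rw [this]
        exact zpow_mem (mem_zpowers σ) m
      haveI hZfin : Finite Z := by
        apply Nat.finite_of_card_ne_zero
        rw [Nat.card_zpowers, hσ]; norm_num
      have hordQ : ∀ q : C ⧸ Z, ∃ k : ℕ, orderOf q = 2 ^ k := by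
        intro q
        obtain ⟨x, rfl⟩ := QuotientGroup.mk'_surjective Z q
        obtain ⟨k, hk⟩ := hord (x : G)
        have hx : orderOf x = 2 ^ k := by
          rw [← hk]; exact (orderOf_injective C.subtype C.subtype_injective x).symm
        have hdvd : orderOf (QuotientGroup.mk' Z x) ∣ 2 ^ k :=
          hx ▸ orderOf_map_dvd (QuotientGroup.mk' Z) x
        obtain ⟨j, _, hje⟩ := (Nat.dvd_prime_pow Nat.prime_two).mp hdvd
        exact ⟨j, hje⟩
      have hbdQ : ∀ H' : Subgroup (C ⧸ Z), Finite H' → Nat.card H' ≤ 2 ^ v := by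
        intro H' hH'
        haveI := hH'
        set T : Set C := QuotientGroup.mk ⁻¹' (H' : Set (C ⧸ Z)) with hT
        have eT : T ≃ Z × (H' : Set (C ⧸ Z)) :=
          QuotientGroup.preimageMkEquivSubgroupProdSet Z _
        haveI : Finite (H' : Set (C ⧸ Z)) := hH'
        haveI hTfin : Finite T := Finite.of_equiv _ eT.symm
        set H : Subgroup C := comap (QuotientGroup.mk' Z) H' with hH
        have hHT : (H : Set C) = T := rfl
        haveI : Finite H := by
          have : (H : Set C).Finite := hHT ▸ (Set.toFinite T)
          exact this.to_subtype
        set Hm : Subgroup G := map C.subtype H with hHm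
        have eHm := equivMapOfInjective H C.subtype C.subtype_injective
        haveI : Finite Hm := Finite.of_equiv H eHm.toEquiv
        have hcard : Nat.card Hm ≤ 2 ^ (v + 1) := hbd Hm inferInstance
        have h1 : Nat.card Hm = Nat.card H := (Nat.card_congr eHm.toEquiv).symm
        have h2 : Nat.card H = Nat.card Z * Nat.card H' := by
          have h := Nat.card_congr ((Equiv.setCongr hHT).trans eT)
          rw [Nat.card_prod] at h
          exact h
        have h3 : Nat.card Z = 2 := by rw [Nat.card_zpowers, hσ]
        rw [h1, h2, h3, pow_succ] at hcard
        omega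
      haveI hQfin : Finite (C ⧸ Z) := ih (C ⧸ Z) hordQ hbdQ
      exact Finite.of_equiv _ (groupEquivQuotientProdSubgroup (s := Z)).symm
    -- Step (b): if no nontrivial element, done
    by_cases htriv : ∀ g : G, g = 1
    · haveI : Subsingleton G := ⟨fun a b => (htriv a).trans (htriv b).symm⟩
      exact Finite.of_subsingleton
    push_neg at htriv
    obtain ⟨g0, hg0⟩ := htriv
    obtain ⟨k0, hk0⟩ := hord g0
    have ht : orderOf (g0 ^ 2 ^ (k0 - 1)) = 2 := order_two_of_pow hg0 hk0
    set t := g0 ^ 2 ^ (k0 - 1) with htdef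
    -- Step (c): the set of involutions is finite
    set S : Set G := {u : G | orderOf u = 2} with hSdef
    set J : Set G := {u : G | u ∈ centralizer ({t} : Set G) ∧ orderOf u = 2} with hJdef
    have hJfin : J.Finite := by
      haveI := hcent t ht
      exact Set.Finite.subset (Set.toFinite ((centralizer ({t} : Set G) : Subgroup G) : Set G))
        (fun u hu => hu.1)
    have sq_one : ∀ u : G, orderOf u = 2 → u * u = 1 := by
      intro u hu
      have h := pow_orderOf_eq_one u
      rw [hu, sq] at h
      exact h
    have inv_self : ∀ u : G, orderOf u = 2 → u⁻¹ = u := fun u hu =>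
      inv_eq_of_mul_eq_one_right (sq_one u hu)
    have hSsub : S ⊆ ⋃ u ∈ J, ((centralizer ({u} : Set G) : Subgroup G) : Set G) := by
      intro s hs
      have hs2 : orderOf s = 2 := hs
      by_cases hc : t * s = s * t
      · refine Set.mem_biUnion (show s ∈ J from ⟨?_, hs2⟩) ?_
        · exact mem_centralizer_iff.mpr (by rintro g rfl; exact hc)
        · exact mem_centralizer_iff.mpr (by rintro g rfl; rfl)
      · obtain ⟨k, hk⟩ := hord (t * s)
        have htinv : t⁻¹ = t := inv_self t ht
        have hsinv : s⁻¹ = s := inv_self s hs2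
        have hr1 : t * s ≠ 1 := by
          intro h
          apply hc
          have hts : t⁻¹ = s := inv_eq_of_mul_eq_one_right h
          rw [htinv] at hts
          rw [← hts]
        have hz : orderOf ((t * s) ^ 2 ^ (k - 1)) = 2 := order_two_of_pow hr1 hk
        have hzinv : ((t * s) ^ 2 ^ (k - 1))⁻¹ = (t * s) ^ 2 ^ (k - 1) := inv_self _ hz
        have hconj_t : t * (t * s) * t⁻¹ = (t * s)⁻¹ := by
          rw [htinv, mul_inv_rev, hsinv, htinv]
          calc t * (t * s) * t = (t * t) * (s * t) := by simp [mul_assoc]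
            _ = s * t := by rw [sq_one t ht, one_mul]
        have hconj_s : s * (t * s) * s⁻¹ = (t * s)⁻¹ := by
          rw [hsinv, mul_inv_rev, hsinv, htinv]
          calc s * (t * s) * s = (s * t) * (s * s) := by simp [mul_assoc]
            _ = s * t := by rw [sq_one s hs2, mul_one]
        have hzt : t * (t * s) ^ 2 ^ (k - 1) * t⁻¹ = (t * s) ^ 2 ^ (k - 1) := by
          have h1 : (MulAut.conj t) ((t * s) ^ 2 ^ (k - 1)) =
              ((MulAut.conj t) (t * s)) ^ 2 ^ (k - 1) := map_pow _ _ _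
          rw [MulAut.conj_apply, MulAut.conj_apply, hconj_t, inv_pow] at h1
          rw [h1, hzinv]
        have hzs : s * (t * s) ^ 2 ^ (k - 1) * s⁻¹ = (t * s) ^ 2 ^ (k - 1) := by
          have h1 : (MulAut.conj s) ((t * s) ^ 2 ^ (k - 1)) =
              ((MulAut.conj s) (t * s)) ^ 2 ^ (k - 1) := map_pow _ _ _
          rw [MulAut.conj_apply, MulAut.conj_apply, hconj_s, inv_pow] at h1
          rw [h1, hzinv]
        have hzt' : t * (t * s) ^ 2 ^ (k - 1) = (t * s) ^ 2 ^ (k - 1) * t :=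
          mul_inv_eq_iff_eq_mul.mp hzt
        have hzs' : s * (t * s) ^ 2 ^ (k - 1) = (t * s) ^ 2 ^ (k - 1) * s :=
          mul_inv_eq_iff_eq_mul.mp hzs
        refine Set.mem_biUnion (show (t * s) ^ 2 ^ (k - 1) ∈ J from ⟨?_, hz⟩) ?_
        · exact mem_centralizer_iff.mpr (by rintro g rfl; exact hzt')
        · exact mem_centralizer_iff.mpr (by rintro g rfl; exact hzs'.symm)
    have hSfin : S.Finite := by
      refine Set.Finite.subset (Set.Finite.biUnion hJfin ?_) hSsub
      intro u hu
      haveI := hcent u hu.2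
      exact Set.toFinite _
    -- Step (d): G is covered by 1 and centralizers of involutions
    have huniv : (Set.univ : Set G) ⊆
        insert 1 (⋃ u ∈ S, ((centralizer ({u} : Set G) : Subgroup G) : Set G)) := by
      intro g _
      by_cases hg : g = 1
      · exact Set.mem_insert_iff.mpr (Or.inl hg)
      refine Set.mem_insert_iff.mpr (Or.inr ?_)
      obtain ⟨k, hk⟩ := hord g
      have hu : orderOf (g ^ 2 ^ (k - 1)) = 2 := order_two_of_pow hg hk
      refine Set.mem_biUnion (show g ^ 2 ^ (k - 1) ∈ S from hu) ?_
      exact mem_centralizer_iff.mpr (by rintro x rfl; exact ((Commute.refl g).pow_left _).eq)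
    have hfin : (Set.univ : Set G).Finite := by
      refine Set.Finite.subset (Set.Finite.insert 1 (Set.Finite.biUnion hSfin ?_)) huniv
      intro u hu
      haveI := hcent u hu
      exact Set.toFinite _
    exact Set.finite_univ_iff.mp hfin

/-- A BSP-group which is a 2-group is finite. -/
theorem bsp_two_group_is_finite (G : Type*) [Group G]
    (hbsp : IsBSPGroup G)
    (h2 : ∀ g : G, ∃ k : ℕ, orderOf g = 2 ^ k) :
    Finite G := by
  by_cases htriv : ∀ g : G, g = 1
  · haveI : Subsingleton G := ⟨fun a b => (htriv a).trans (htriv b).symm⟩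
    exact Finite.of_subsingleton
  push_neg at htriv
  obtain ⟨g0, hg0⟩ := htriv
  obtain ⟨k0, hk0⟩ := h2 g0
  have hk0pos : 0 < k0 := by
    rcases Nat.eq_zero_or_pos k0 with h | h
    · exfalso; apply hg0; rw [← orderOf_eq_one_iff, hk0, h, pow_zero]
    · exact h
  have hdvd : (2 : ℕ) ∣ orderOf g0 := by
    rw [hk0]; exact dvd_pow_self 2 hk0pos.ne'
  obtain ⟨v, _, hv⟩ := hbsp.2 2 Nat.prime_two ⟨g0, hdvd⟩
  apply key v G h2
  intro H hH
  apply hv H hH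
  intro h
  obtain ⟨k, hk⟩ := h2 (h : G)
  refine ⟨k, ?_⟩
  ext
  push_cast
  rw [← hk]
  exact pow_orderOf_eq_one _
end

section
/- Let G be a BSP-group and let t be an involution in G. Then the centralizer C_G(t) is a finite 2-group. -/
open Subgroup Pointwise

private lemma finite_of_fibers {α β : Type*} {s : Set α} (f : α → β)
    (him : (f '' s).Finite) (hfib : ∀ b ∈ f '' s, (s ∩ f ⁻¹' {b}).Finite) :
    s.Finite := by
  have hsub : s ⊆ ⋃ b ∈ f '' s, s ∩ f ⁻¹' {b} := fun a ha =>
    Set.mem_biUnion (Set.mem_image_of_mem f ha) ⟨ha, rfl⟩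
  exact (him.biUnion hfib).subset hsub

private lemma exists_infinite_fiber'' {α β : Type*} {s : Set α} (f : α → β)
    (hs : s.Infinite) (him : (f '' s).Finite) :
    ∃ b ∈ f '' s, (s ∩ f ⁻¹' {b}).Infinite := by
  by_contra h
  push_neg at h
  exact hs (finite_of_fibers f him (fun b hb => h b hb))

private lemma infinite_image_of_fibers {α β : Type*} {s : Set α} (f : α → β) (hs : s.Infinite)
    (hfib : ∀ b ∈ f '' s, (s ∩ f ⁻¹' {b}).Finite) : (f '' s).Infinite := by
  intro hfin
  exact hs (finite_of_fibers f hfin hfib)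

private lemma conj_pow'' {G : Type*} [Group G] (g x : G) (m : ℕ) :
    (g * x * g⁻¹) ^ m = g * x ^ m * g⁻¹ := by
  induction m with
  | zero => group
  | succ m ih => rw [pow_succ, ih, pow_succ]; group

/-- An infinite group all of whose element orders divide `2 ^ n`, with finite center and
finite centralizers of all noncentral elements, cannot exist. -/
private lemma lemB {K : Type*} [Group K] (n : ℕ)
    (hexp : ∀ g : K, orderOf g ∣ 2 ^ n)
    (hcen : ((Subgroup.center K : Subgroup K) : Set K).Finite)
    (hfin : ∀ z : K, z ∉ Subgroup.center K →
      ((Subgroup.centralizer {z} : Subgroup K) : Set K).Finite) :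
    Finite K := by
  by_contra hK
  rw [not_finite_iff_infinite] at hK
  set Z := Subgroup.center K with hZ
  -- fibers of the quotient map are finite
  have hmkfib : ∀ (s : Set K) (b : K ⧸ Z),
      (s ∩ (QuotientGroup.mk : K → K ⧸ Z) ⁻¹' {b}).Finite := by
    intro s b
    have hsub : s ∩ (QuotientGroup.mk : K → K ⧸ Z) ⁻¹' {b} ⊆
        (fun ζ => b.out * ζ) '' (Z : Set K) := by
      rintro a ⟨-, ha⟩
      have ha' : (QuotientGroup.mk a : K ⧸ Z) = b := ha
      have h1 : (QuotientGroup.mk (b.out⁻¹ * a) : K ⧸ Z) = 1 := by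
        rw [QuotientGroup.mk_mul, QuotientGroup.mk_inv, QuotientGroup.out_eq', ha',
          inv_mul_cancel]
      exact ⟨b.out⁻¹ * a, (QuotientGroup.eq_one_iff _).mp h1, by group⟩
    exact (hcen.image _).subset hsub
  have hQinf : Infinite (K ⧸ Z) := by
    by_contra hQ
    rw [not_infinite_iff_finite] at hQ
    have huniv : (Set.univ : Set K).Finite :=
      finite_of_fibers (QuotientGroup.mk : K → K ⧸ Z) (Set.toFinite _)
        (fun b _ => hmkfib _ b)
    exact Set.infinite_univ (α := K) huniv
  -- every nontrivial element of the quotient has finite centralizer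
  have invfin : ∀ q : K ⧸ Z, q ≠ 1 →
      ((Subgroup.centralizer {q} : Subgroup (K ⧸ Z)) : Set (K ⧸ Z)).Finite := by
    intro q hq1
    set z : K := q.out with hzdef
    have hmkz : (QuotientGroup.mk z : K ⧸ Z) = q := QuotientGroup.out_eq' q
    have hz : z ∉ Z := by
      intro hz
      exact hq1 (by rw [← hmkz]; exact (QuotientGroup.eq_one_iff _).mpr hz)
    set A : Set (K ⧸ Z) :=
      ((Subgroup.centralizer {q} : Subgroup (K ⧸ Z)) : Set (K ⧸ Z)) with hA
    set f : K ⧸ Z → K := fun d => d.out * z * d.out⁻¹ with hf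
    have hmkf : ∀ d ∈ A, (QuotientGroup.mk (f d) : K ⧸ Z) = q := by
      intro d hd
      have hdq : d * q = q * d := Subgroup.mem_centralizer_singleton_iff.mp hd
      have h2 : (QuotientGroup.mk (f d) : K ⧸ Z) = d * q * d⁻¹ := by
        simp only [hf, QuotientGroup.mk_mul, QuotientGroup.mk_inv, QuotientGroup.out_eq', hmkz]
      rw [h2, hdq]
      group
    have him : (f '' A).Finite := by
      refine (hcen.image (fun ζ => z * ζ)).subset ?_
      rintro - ⟨d, hd, rfl⟩
      have h1 : (QuotientGroup.mk (z⁻¹ * f d) : K ⧸ Z) = 1 := by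
        rw [QuotientGroup.mk_mul, QuotientGroup.mk_inv, hmkz, hmkf d hd, inv_mul_cancel]
      exact ⟨z⁻¹ * f d, (QuotientGroup.eq_one_iff _).mp h1, by group⟩
    refine finite_of_fibers f him ?_
    rintro b ⟨d₀, hd₀, rfl⟩
    have hsub : A ∩ f ⁻¹' {f d₀} ⊆
        (fun w => d₀ * w) '' ((QuotientGroup.mk : K → K ⧸ Z) ''
          ((Subgroup.centralizer {z} : Subgroup K) : Set K)) := by
      rintro d ⟨hdA, hdf⟩
      have hdf' : f d = f d₀ := hdf
      have hdf'' : d.out * z * d.out⁻¹ = d₀.out * z * d₀.out⁻¹ := hdf'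
      have hcz : d₀.out⁻¹ * d.out ∈ Subgroup.centralizer ({z} : Set K) := by
        rw [Subgroup.mem_centralizer_singleton_iff]
        calc (d₀.out⁻¹ * d.out) * z
            = d₀.out⁻¹ * (d.out * z * d.out⁻¹) * d.out := by group
          _ = d₀.out⁻¹ * (d₀.out * z * d₀.out⁻¹) * d.out := by rw [hdf'']
          _ = z * (d₀.out⁻¹ * d.out) := by group
      refine ⟨QuotientGroup.mk (d₀.out⁻¹ * d.out), ⟨_, hcz, rfl⟩, ?_⟩
      have h3 : (QuotientGroup.mk (d₀.out⁻¹ * d.out) : K ⧸ Z) = d₀⁻¹ * d := by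
        rw [QuotientGroup.mk_mul, QuotientGroup.mk_inv, QuotientGroup.out_eq',
          QuotientGroup.out_eq']
      rw [h3]
      group
    exact (((hfin z hz).image _).image _).subset hsub
  -- element orders in the quotient
  have hexpQ : ∀ q : K ⧸ Z, orderOf q ∣ 2 ^ n := by
    intro q
    obtain ⟨g, rfl⟩ := QuotientGroup.mk_surjective q
    exact (orderOf_map_dvd (QuotientGroup.mk' Z) g).trans (hexp g)
  -- find an involution u in the quotient
  obtain ⟨q, hq⟩ := exists_ne (1 : K ⧸ Z)
  obtain ⟨k, -, hk⟩ := (Nat.dvd_prime_pow Nat.prime_two).mp (hexpQ q)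
  have hkne : k ≠ 0 := by
    rintro rfl
    exact hq (orderOf_eq_one_iff.mp (by simpa using hk))
  set u : K ⧸ Z := q ^ (2 ^ (k - 1)) with hu
  have hu2 : u ^ 2 = 1 := by
    rw [hu, ← pow_mul, ← pow_succ]
    have h4 : k - 1 + 1 = k := Nat.succ_pred_eq_of_pos (Nat.pos_of_ne_zero hkne)
    rw [h4, ← hk, pow_orderOf_eq_one]
  have hu1 : u ≠ 1 := by
    intro h
    have h5 : orderOf q ∣ 2 ^ (k - 1) := orderOf_dvd_of_pow_eq_one h
    rw [hk] at h5
    have h6 := Nat.le_of_dvd (pow_pos (by norm_num) _) h5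
    have h7 : (2 : ℕ) ^ (k - 1) < 2 ^ k :=
      pow_lt_pow_right₀ (by norm_num) (Nat.pred_lt hkne)
    omega
  have huinv : u⁻¹ = u := by
    rw [← mul_eq_one_iff_inv_eq, ← pow_two, hu2]
  -- the conjugacy class of u is infinite
  set f1 : K ⧸ Z → K ⧸ Z := fun w => w * u * w⁻¹ with hf1
  have hRinf : (f1 '' Set.univ).Infinite := by
    refine infinite_image_of_fibers f1 Set.infinite_univ ?_
    rintro b ⟨w₀, -, rfl⟩
    have hsub : Set.univ ∩ f1 ⁻¹' {f1 w₀} ⊆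
        (fun c => w₀ * c) ''
          ((Subgroup.centralizer {u} : Subgroup (K ⧸ Z)) : Set (K ⧸ Z)) := by
      rintro w ⟨-, hw⟩
      have hw' : w * u * w⁻¹ = w₀ * u * w₀⁻¹ := hw
      refine ⟨w₀⁻¹ * w, ?_, by group⟩
      rw [SetLike.mem_coe, Subgroup.mem_centralizer_singleton_iff]
      calc (w₀⁻¹ * w) * u
          = w₀⁻¹ * (w * u * w⁻¹) * w := by group
        _ = w₀⁻¹ * (w₀ * u * w₀⁻¹) * w := by rw [hw']
        _ = u * (w₀⁻¹ * w) := by group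
    exact ((invfin u hu1).image _).subset hsub
  have hRprop : ∀ r ∈ f1 '' Set.univ, r ≠ 1 ∧ r ^ 2 = 1 := by
    rintro r ⟨w, -, rfl⟩
    constructor
    · intro h
      apply hu1
      have h8 : u = w⁻¹ * (w * u * w⁻¹) * w := by group
      rw [show (f1 w : K ⧸ Z) = w * u * w⁻¹ from rfl] at h
      rw [h8, h]
      group
    · show (w * u * w⁻¹) ^ 2 = 1
      rw [conj_pow'', hu2]
      group
  set S : Set (K ⧸ Z) := (f1 '' Set.univ) \ {u} with hS
  have hSinf : S.Infinite := hRinf.diff (Set.finite_singleton u)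
  set Ψ : K ⧸ Z → K ⧸ Z := fun c => (u * c) ^ (orderOf (u * c) / 2) with hΨ
  have hkey : ∀ c ∈ S, (u * Ψ c = Ψ c * u) ∧ (c * Ψ c = Ψ c * c) ∧ Ψ c ≠ 1 := by
    rintro c ⟨hcR, hcu⟩
    obtain ⟨hc1, hc2⟩ := hRprop c hcR
    have hcinv : c⁻¹ = c := by rw [← mul_eq_one_iff_inv_eq, ← pow_two, hc2]
    have hcu' : c ≠ u := hcu
    have hwne : u * c ≠ 1 := by
      intro h
      exact hcu' ((eq_inv_of_mul_eq_one_right h).trans huinv)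
    obtain ⟨a, -, ha⟩ := (Nat.dvd_prime_pow Nat.prime_two).mp (hexpQ (u * c))
    have hane : a ≠ 0 := by
      rintro rfl
      exact hwne (orderOf_eq_one_iff.mp (by simpa using ha))
    have h2dvd : 2 ∣ orderOf (u * c) := by
      rw [ha]; exact dvd_pow_self 2 hane
    set m : ℕ := orderOf (u * c) / 2 with hm
    have hm2 : m * 2 = orderOf (u * c) := Nat.div_mul_cancel h2dvd
    have hΨc : Ψ c = (u * c) ^ m := rfl
    have hψ2 : (Ψ c) ^ 2 = 1 := by rw [hΨc, ← pow_mul, hm2, pow_orderOf_eq_one]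
    have hψinv : (Ψ c)⁻¹ = Ψ c := by rw [← mul_eq_one_iff_inv_eq, ← pow_two, hψ2]
    have hψne : Ψ c ≠ 1 := by
      rw [hΨc]
      intro h
      have hdvd := orderOf_dvd_of_pow_eq_one h
      have hordpos : 0 < orderOf (u * c) := by rw [ha]; exact pow_pos (by norm_num) _
      have hmpos : 0 < m := by omega
      have hle := Nat.le_of_dvd hmpos hdvd
      omega
    -- u conjugates u*c to its inverse
    have hconju : u * (u * c) * u⁻¹ = (u * c)⁻¹ := by
      calc u * (u * c) * u⁻¹ = u * u * (c * u⁻¹) := by group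
        _ = c * u⁻¹ := by rw [← pow_two, hu2, one_mul]
        _ = c * u := by rw [huinv]
        _ = (u * c)⁻¹ := by rw [mul_inv_rev, hcinv, huinv]
    have hconjc : c * (u * c) * c⁻¹ = (u * c)⁻¹ := by
      calc c * (u * c) * c⁻¹ = c * u := by group
        _ = (u * c)⁻¹ := by rw [mul_inv_rev, hcinv, huinv]
    have hmain : ∀ g : K ⧸ Z, g * (u * c) * g⁻¹ = (u * c)⁻¹ → g * Ψ c = Ψ c * g := by
      intro g hg
      have h10 : g * Ψ c * g⁻¹ = Ψ c := by
        rw [hΨc, ← conj_pow'', hg, inv_pow, ← hΨc, hψinv]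
      calc g * Ψ c = (g * Ψ c * g⁻¹) * g := by group
        _ = Ψ c * g := by rw [h10]
    exact ⟨hmain u hconju, hmain c hconjc, hψne⟩
  -- pigeonhole
  have himgΨ : Ψ '' S ⊆
      ((Subgroup.centralizer {u} : Subgroup (K ⧸ Z)) : Set (K ⧸ Z)) := by
    rintro - ⟨c, hcS, rfl⟩
    rw [SetLike.mem_coe, Subgroup.mem_centralizer_singleton_iff]
    exact (hkey c hcS).1.symm
  obtain ⟨b, hbmem, hbinf⟩ := exists_infinite_fiber'' Ψ hSinf ((invfin u hu1).subset himgΨ)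
  obtain ⟨c₀, hc₀S, hbc₀⟩ := hbmem
  have hbne : b ≠ 1 := by rw [← hbc₀]; exact (hkey c₀ hc₀S).2.2
  have hsub2 : S ∩ Ψ ⁻¹' {b} ⊆
      ((Subgroup.centralizer {b} : Subgroup (K ⧸ Z)) : Set (K ⧸ Z)) := by
    rintro c ⟨hcS, hcb⟩
    have hcb' : Ψ c = b := hcb
    rw [SetLike.mem_coe, Subgroup.mem_centralizer_singleton_iff, ← hcb']
    exact (hkey c hcS).2.1
  exact (hbinf.mono hsub2) (invfin b hbne)

/-- A group in which all element orders divide `2 ^ n`, and in which all finite subgroups have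
at most `2 ^ n` elements, is finite. -/
private lemma lemA {H : Type*} [Group H] (n : ℕ)
    (hexp : ∀ g : H, orderOf g ∣ 2 ^ n)
    (hbound : ∀ K : Subgroup H, (K : Set H).Finite → (K : Set H).ncard ≤ 2 ^ n) :
    Finite H := by
  by_contra hH
  rw [not_finite_iff_infinite] at hH
  set 𝒮 : Set ℕ := {m | ∃ D : Subgroup H, (D : Set H).Finite ∧
      ((Subgroup.centralizer (D : Set H) : Subgroup H) : Set H).Infinite ∧
      (D : Set H).ncard = m} with h𝒮
  have hbotfin : ((⊥ : Subgroup H) : Set H).Finite := by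
    rw [Subgroup.coe_bot]; exact Set.finite_singleton 1
  have hbotcen : ((Subgroup.centralizer ((⊥ : Subgroup H) : Set H) : Subgroup H) :
      Set H).Infinite := by
    refine Set.Infinite.mono ?_ Set.infinite_univ
    intro g _
    rw [SetLike.mem_coe, Subgroup.mem_centralizer_iff]
    intro h hb
    rw [Subgroup.coe_bot, Set.mem_singleton_iff] at hb
    subst hb
    rw [one_mul, mul_one]
  have hne : 𝒮.Nonempty := ⟨_, ⊥, hbotfin, hbotcen, rfl⟩
  have hbdd : BddAbove 𝒮 := by
    refine ⟨2 ^ n, ?_⟩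
    rintro m ⟨D, hf, -, hc⟩
    exact hc ▸ hbound D hf
  obtain ⟨D, hDfin, hWinf, hDcard⟩ := Nat.sSup_mem hne hbdd
  set W := Subgroup.centralizer (D : Set H) with hWdef
  -- maximality claim
  have claim1 : ∀ z : H, z ∈ W → z ∉ D →
      ((Subgroup.centralizer ({z} : Set H) ⊓ W : Subgroup H) : Set H).Finite := by
    intro z hzW hzD
    have hzc : ∀ d ∈ (D : Set H), d * z = z * d := Subgroup.mem_centralizer_iff.mp hzW
    have hcommD : ∀ d ∈ (D : Set H), ∀ w ∈ (Subgroup.zpowers z : Set H), w * d = d * w := by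
      intro d hd w hw
      rw [SetLike.mem_coe, Subgroup.mem_zpowers_iff] at hw
      obtain ⟨i, rfl⟩ := hw
      have hzd : Commute z d := ((hzc d hd).symm : z * d = d * z)
      exact (hzd.zpow_left i).eq
    let E : Subgroup H :=
      { carrier := (D : Set H) * ((Subgroup.zpowers z : Subgroup H) : Set H)
        one_mem' := ⟨1, D.one_mem, 1, Subgroup.one_mem _, one_mul 1⟩
        mul_mem' := by
          rintro a b ⟨d1, hd1, w1, hw1, rfl⟩ ⟨d2, hd2, w2, hw2, rfl⟩
          refine ⟨d1 * d2, mul_mem hd1 hd2, w1 * w2, mul_mem hw1 hw2, ?_⟩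
          have h := hcommD d2 hd2 w1 hw1
          calc d1 * d2 * (w1 * w2) = d1 * (d2 * w1) * w2 := by group
            _ = d1 * (w1 * d2) * w2 := by rw [← h]
            _ = d1 * w1 * (d2 * w2) := by group
        inv_mem' := by
          rintro a ⟨d, hd, w, hw, rfl⟩
          refine ⟨d⁻¹, inv_mem hd, w⁻¹, inv_mem hw, ?_⟩
          have h := hcommD d hd w hw
          calc d⁻¹ * w⁻¹ = (w * d)⁻¹ := by rw [mul_inv_rev]
            _ = (d * w)⁻¹ := by rw [h] }
    have hzfo : IsOfFinOrder z := by
      rw [← orderOf_pos_iff]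
      rcases Nat.eq_zero_or_pos (orderOf z) with h0 | h
      · exfalso
        have := hexp z
        rw [h0] at this
        exact (pow_ne_zero n two_ne_zero) (Nat.eq_zero_of_zero_dvd this)
      · exact h
    have hzfin : ((Subgroup.zpowers z : Subgroup H) : Set H).Finite := finite_zpowers.mpr hzfo
    have hEcar : (E : Set H) = (D : Set H) * ((Subgroup.zpowers z : Subgroup H) : Set H) := rfl
    have hEfin : (E : Set H).Finite := by rw [hEcar]; exact Set.Finite.mul hDfin hzfin
    have hDE : (D : Set H) ⊆ (E : Set H) := fun d hd => ⟨d, hd, 1, Subgroup.one_mem _, mul_one d⟩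
    have hzE : z ∈ E := ⟨1, D.one_mem, z, Subgroup.mem_zpowers z, one_mul z⟩
    have hssub : (D : Set H) ⊂ (E : Set H) := ⟨hDE, fun hsub => hzD (hsub hzE)⟩
    have hcardlt : (D : Set H).ncard < (E : Set H).ncard := Set.ncard_lt_ncard hssub hEfin
    have hcenE : ¬ ((Subgroup.centralizer (E : Set H) : Subgroup H) : Set H).Infinite := by
      intro hinf
      have hmem : (E : Set H).ncard ∈ 𝒮 := ⟨E, hEfin, hinf, rfl⟩
      have hle := le_csSup hbdd hmem
      omega
    rw [Set.not_infinite] at hcenE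
    refine hcenE.subset ?_
    intro g hg
    rw [SetLike.mem_coe, Subgroup.mem_inf] at hg
    obtain ⟨hgz, hgW⟩ := hg
    rw [SetLike.mem_coe, Subgroup.mem_centralizer_iff]
    rintro h ⟨d, hd, w, hw, rfl⟩
    have h1 : d * g = g * d := Subgroup.mem_centralizer_iff.mp hgW d hd
    have h2 : w * g = g * w := by
      rw [SetLike.mem_coe, Subgroup.mem_zpowers_iff] at hw
      obtain ⟨i, rfl⟩ := hw
      have hgz' : Commute g z := Subgroup.mem_centralizer_singleton_iff.mp hgz
      exact (hgz'.symm.zpow_left i).eq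
    calc d * w * g = d * (w * g) := by group
      _ = d * (g * w) := by rw [h2]
      _ = (d * g) * w := by group
      _ = g * (d * w) := by rw [h1]; group
  -- transfer to the subgroup W as a group
  have hWinf' : Infinite ↥W := Set.infinite_coe_iff.mpr hWinf
  have hexpW : ∀ g : ↥W, orderOf g ∣ 2 ^ n := by
    intro g
    rw [← orderOf_injective W.subtype W.subtype_injective g]
    exact hexp _
  have hDmem : ∀ w : ↥W, w ∈ Subgroup.center ↥W → (w : H) ∈ D := by
    intro w hw
    by_contra hnD
    have hfinz := claim1 (w : H) w.2 hnD
    refine hWinf (hfinz.subset ?_)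
    intro g hgW
    rw [SetLike.mem_coe, Subgroup.mem_inf]
    have hgW' : g ∈ W := hgW
    refine ⟨Subgroup.mem_centralizer_singleton_iff.mpr ?_, hgW'⟩
    have hc := (Subgroup.mem_center_iff.mp hw) ⟨g, hgW'⟩
    exact congrArg Subtype.val hc
  have hcenW : ((Subgroup.center ↥W : Subgroup ↥W) : Set ↥W).Finite := by
    have hsub : ((Subgroup.center ↥W : Subgroup ↥W) : Set ↥W) ⊆
        (Subtype.val) ⁻¹' (D : Set H) := fun w hw => hDmem w hw
    exact (hDfin.preimage (Subtype.val_injective.injOn)).subset hsub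
  have hfinW : ∀ z : ↥W, z ∉ Subgroup.center ↥W →
      ((Subgroup.centralizer {z} : Subgroup ↥W) : Set ↥W).Finite := by
    intro z hz
    have hzD : (z : H) ∉ D := by
      intro hzD
      apply hz
      rw [Subgroup.mem_center_iff]
      intro g
      apply Subtype.ext
      exact (Subgroup.mem_centralizer_iff.mp g.2 (z : H) hzD).symm
    have hfinset := claim1 (z : H) z.2 hzD
    have hsub : ((Subgroup.centralizer {z} : Subgroup ↥W) : Set ↥W) ⊆
        Subtype.val ⁻¹' ((Subgroup.centralizer ({(z : H)} : Set H) ⊓ W : Subgroup H) : Set H) := by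
      intro g hg
      rw [SetLike.mem_coe, Subgroup.mem_centralizer_singleton_iff] at hg
      simp only [Set.mem_preimage, SetLike.mem_coe, Subgroup.mem_inf]
      exact ⟨Subgroup.mem_centralizer_singleton_iff.mpr (congrArg Subtype.val hg), g.2⟩
    exact (hfinset.preimage (Subtype.val_injective.injOn)).subset hsub
  have : Finite ↥W := lemB n hexpW hcenW hfinW
  exact hWinf (Set.finite_coe_iff.mp this)

/-- In a BSP-group the centralizer of an involution is a finite 2-group. -/
theorem bsp_centralizer_involution_finite_two_group (G : Type*) [Group G]
    (hbsp : IsBSPGroup G)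
    (t : G) (ht : orderOf t = 2) :
    Finite (Subgroup.centralizer ({t} : Set G)) ∧
    (∀ x : G, x ∈ Subgroup.centralizer ({t} : Set G) → ∃ k : ℕ, orderOf x = 2 ^ k) := by
  obtain ⟨hEPPO, hSylow⟩ := hbsp
  set C := Subgroup.centralizer ({t} : Set G) with hC
  -- every element of the centralizer has 2-power order
  have htwo : ∀ x : G, x ∈ C → ∃ k : ℕ, orderOf x = 2 ^ k := by
    intro x hx
    obtain ⟨p, k, hp, hxo⟩ := hEPPO x
    rcases Nat.eq_zero_or_pos k with hk0 | hkpos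
    · exact ⟨0, by rw [hxo, hk0, pow_zero, pow_zero]⟩
    by_cases hp2 : p = 2
    · exact ⟨k, by rw [hxo, hp2]⟩
    exfalso
    have hcomm : Commute x t := Subgroup.mem_centralizer_singleton_iff.mp hx
    have hcop : Nat.Coprime (orderOf x) (orderOf t) := by
      rw [hxo, ht]
      exact (Nat.coprime_pow_left_iff hkpos _ _).mpr
        ((Nat.coprime_primes hp Nat.prime_two).mpr hp2)
    have horder := hcomm.orderOf_mul_eq_mul_orderOf_of_coprime hcop
    obtain ⟨q, m, hq, hqm⟩ := hEPPO (x * t)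
    have heq : q ^ m = p ^ k * 2 := by rw [← hqm, horder, hxo, ht]
    have h2q : 2 ∣ q ^ m := by rw [heq]; exact dvd_mul_left 2 (p ^ k)
    have hq2 : q = 2 :=
      ((Nat.prime_dvd_prime_iff_eq Nat.prime_two hq).mp (Nat.prime_two.dvd_of_dvd_pow h2q)).symm
    have hpq : p ∣ q ^ m := by
      rw [heq]
      exact Dvd.dvd.mul_right (dvd_pow_self p hkpos.ne') 2
    have hpdvd := hp.dvd_of_dvd_pow hpq
    rw [hq2] at hpdvd
    exact hp2 ((Nat.prime_dvd_prime_iff_eq hp Nat.prime_two).mp hpdvd)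
  -- the bound for the prime 2
  obtain ⟨v, hv0, hvB⟩ := hSylow 2 Nat.prime_two ⟨t, by rw [ht]⟩
  -- orders of elements of C divide 2 ^ v
  have hordC : ∀ x : G, x ∈ C → orderOf x ∣ 2 ^ v := by
    intro x hx
    obtain ⟨k, hk⟩ := htwo x hx
    have hzfo : IsOfFinOrder x := by
      rw [← orderOf_pos_iff, hk]
      exact pow_pos (by norm_num) _
    have hzfin : Finite (Subgroup.zpowers x) :=
      Set.finite_coe_iff.mpr (finite_zpowers.mpr hzfo)
    have hpg : IsPGroup 2 (Subgroup.zpowers x) :=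
      IsPGroup.of_card (by rw [Nat.card_zpowers, hk])
    have hle := hvB _ hzfin hpg
    rw [Nat.card_zpowers, hk] at hle
    have hkv : k ≤ v := by
      by_contra hlt
      push_neg at hlt
      have := pow_lt_pow_right₀ (by norm_num : (1 : ℕ) < 2) hlt
      omega
    rw [hk]
    exact pow_dvd_pow 2 hkv
  -- hypotheses of lemA for the group ↥C
  have hexpC : ∀ g : ↥C, orderOf g ∣ 2 ^ v := by
    intro g
    rw [← orderOf_injective C.subtype C.subtype_injective g]
    exact hordC _ g.2
  have hboundC : ∀ K : Subgroup ↥C, (K : Set ↥C).Finite → (K : Set ↥C).ncard ≤ 2 ^ v := by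
    intro K hKfin
    haveI hKfin' : Finite ↥K := Set.finite_coe_iff.mpr hKfin
    set K' := K.map C.subtype with hK'
    have e : ↥K ≃* ↥K' := K.equivMapOfInjective C.subtype C.subtype_injective
    haveI hK'fin : Finite ↥K' := Finite.of_equiv ↥K e.toEquiv
    have hpg : IsPGroup 2 ↥K' := by
      intro g
      have hgC : (g : G) ∈ C := by
        obtain ⟨y, -, hy⟩ := Subgroup.mem_map.mp g.2
        rw [← hy]
        exact y.2
      obtain ⟨j, hj⟩ := htwo _ hgC
      refine ⟨j, ?_⟩
      have h1 : orderOf g = 2 ^ j := by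
        rw [← hj]
        exact (orderOf_injective K'.subtype K'.subtype_injective g).symm
      rw [← h1]
      exact pow_orderOf_eq_one g
    calc (K : Set ↥C).ncard = Nat.card ↥K := (Nat.card_coe_set_eq _).symm
      _ = Nat.card ↥K' := Nat.card_congr e.toEquiv
      _ ≤ 2 ^ v := hvB K' hK'fin hpg
  exact ⟨lemA v hexpC hboundC, htwo⟩
end

section
/- Let G be an infinite 2-group in which, for some positive integer v, every finite subgroup has order at most 2^v. Then we reach a contradiction; equivalently, a 2-group in which the orders of finite subgroups are bounded is finite. -/
open Subgroup

private lemma involution_aux {G : Type*} [Group G] {g : G}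
    (hg : g ≠ 1) {k : ℕ} (hk : orderOf g = 2 ^ k) :
    ∃ i ∈ zpowers g, orderOf i = 2 := by
  have hk0 : k ≠ 0 := by
    rintro rfl
    exact hg (orderOf_eq_one_iff.mp (by simpa using hk))
  refine ⟨g ^ (2 ^ (k - 1)), pow_mem (mem_zpowers g) _, ?_⟩
  have hsq : (g ^ 2 ^ (k - 1)) ^ 2 = 1 := by
    rw [← pow_mul, ← pow_succ, Nat.sub_add_cancel (Nat.one_le_iff_ne_zero.mpr hk0), ← hk]
    exact pow_orderOf_eq_one g
  have hne : g ^ 2 ^ (k - 1) ≠ 1 := by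
    intro h
    have hd := orderOf_dvd_of_pow_eq_one h
    rw [hk] at hd
    have h1 := Nat.le_of_dvd (by positivity) hd
    have h2 : (2:ℕ) ^ (k - 1) < 2 ^ k := Nat.pow_lt_pow_right one_lt_two (Nat.pred_lt hk0)
    omega
  exact orderOf_eq_prime hsq hne

private lemma inv_sq_one {G : Type*} [Group G] {i : G} (hi : orderOf i = 2) :
    i⁻¹ = i := by
  have h := pow_orderOf_eq_one i
  rw [hi, pow_two] at h
  exact inv_eq_of_mul_eq_one_right h

private lemma commute_of_conj_inv {G : Type*} [Group G] {a g z : G}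
    (ha : a * g * a⁻¹ = g⁻¹) (hz : z ∈ zpowers g) (hzinv : z⁻¹ = z) :
    Commute a z := by
  obtain ⟨n, rfl⟩ := mem_zpowers_iff.mp hz
  have h : a * g ^ n * a⁻¹ = (g ^ n)⁻¹ := by
    rw [← conj_zpow, ha, inv_zpow]
  rw [hzinv] at h
  exact (mul_inv_eq_iff_eq_mul.mp h)

private lemma dihedral_trick {G : Type*} [Group G]
    (h2 : ∀ g : G, ∃ k : ℕ, orderOf g = 2 ^ k)
    {i j : G} (hi : orderOf i = 2) (hj : orderOf j = 2) (hij : i ≠ j) :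
    ∃ z : G, orderOf z = 2 ∧ Commute i z ∧ Commute j z := by
  have hisq : i * i = 1 := by
    have := pow_orderOf_eq_one i; rwa [hi, pow_two] at this
  have hjsq : j * j = 1 := by
    have := pow_orderOf_eq_one j; rwa [hj, pow_two] at this
  have hiinv := inv_sq_one hi
  have hjinv := inv_sq_one hj
  have hgne : i * j ≠ 1 := by
    intro h
    apply hij
    have h' : i⁻¹ = j := inv_eq_of_mul_eq_one_right h
    rw [hiinv] at h'
    exact h'.symm ▸ rfl
  obtain ⟨k, hk⟩ := h2 (i * j)
  obtain ⟨z, hzmem, hz2⟩ := involution_aux hgne hk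
  have hzinv := inv_sq_one hz2
  have hci : i * (i * j) * i⁻¹ = (i * j)⁻¹ := by
    rw [hiinv, mul_inv_rev, hiinv, hjinv, ← mul_assoc, hisq, one_mul]
  have hcj : j * (i * j) * j⁻¹ = (i * j)⁻¹ := by
    rw [hjinv, mul_inv_rev, hiinv, hjinv, mul_assoc, mul_assoc, hjsq, mul_one]
  exact ⟨z, hz2, commute_of_conj_inv hci hzmem hzinv, commute_of_conj_inv hcj hzmem hzinv⟩

private lemma exists_inv_infinite_centralizer {G : Type*} [Group G] [Infinite G]
    (h2 : ∀ g : G, ∃ k : ℕ, orderOf g = 2 ^ k) :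
    ∃ i : G, orderOf i = 2 ∧ Infinite (centralizer {i} : Subgroup G) := by
  by_contra hcon
  push_neg at hcon
  have hfin : ∀ i : G, orderOf i = 2 → Finite (centralizer {i} : Subgroup G) :=
    fun i hi => hcon i hi
  set I : Set G := {x : G | orderOf x = 2} with hI
  by_cases hIfin : I.Finite
  · -- finitely many involutions: univ covered by finitely many finite centralizers
    have huniv : (Set.univ : Set G) ⊆ {1} ∪ ⋃ i ∈ I, (centralizer {i} : Subgroup G) := by
      intro g _
      by_cases hg : g = 1
      · exact Or.inl hg
      · obtain ⟨k, hk⟩ := h2 g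
        obtain ⟨z, hzmem, hz2⟩ := involution_aux hg hk
        refine Or.inr (Set.mem_biUnion hz2 ?_)
        obtain ⟨n, rfl⟩ := mem_zpowers_iff.mp hzmem
        exact mem_centralizer_iff.mpr (by
          rintro x rfl
          exact ((Commute.refl g).zpow_right n).symm.eq)
    have hfin2 : (Set.univ : Set G).Finite := by
      refine Set.Finite.subset (Set.Finite.union (Set.finite_singleton 1)
        (hIfin.biUnion fun i hi => ?_)) huniv
      exact Set.finite_coe_iff.mp (hfin i hi)
    exact Set.infinite_univ hfin2
  · -- infinitely many involutions: dihedral trick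
    have hIinf : I.Infinite := hIfin
    obtain ⟨i₀, hi₀⟩ := hIinf.nonempty
    have hC0 : Finite (centralizer {i₀} : Subgroup G) := hfin i₀ hi₀
    set A : Set G := I \ {i₀} with hA
    have hAinf : A.Infinite := hIinf.diff (Set.finite_singleton i₀)
    haveI := hAinf.to_subtype
    have key : ∀ j : A, ∃ z : G, orderOf z = 2 ∧ Commute i₀ z ∧ Commute (j : G) z := by
      rintro ⟨j, hjI, hjne⟩
      exact dihedral_trick h2 hi₀ hjI fun h => hjne (Set.mem_singleton_iff.mpr h.symm)
    choose zf hzf2 hzfi hzfj using key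
    set f : A → (centralizer {i₀} : Subgroup G) :=
      fun j => ⟨zf j, mem_centralizer_iff.mpr (by rintro x rfl; exact (hzfi j).eq)⟩ with hf
    obtain ⟨z₀, hz₀⟩ := Finite.exists_infinite_fiber f
    obtain ⟨j₀, hj₀⟩ := (Set.infinite_coe_iff.mp hz₀).nonempty
    have hz₀2 : orderOf (z₀ : G) = 2 := by
      have : zf j₀ = (z₀ : G) := congrArg Subtype.val hj₀
      rw [← this]; exact hzf2 j₀
    have hinj : Function.Injective
        (fun j : (f ⁻¹' {z₀}) => (⟨(j : A), mem_centralizer_iff.mpr (by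
          rintro x rfl
          have : zf (j : A) = (z₀ : G) := congrArg Subtype.val j.2
          exact this ▸ (hzfj (j : A)).symm.eq)⟩ :
          (centralizer {(z₀ : G)} : Subgroup G))) := by
      intro a b h
      have h1 := congrArg Subtype.val h
      exact Subtype.ext (Subtype.ext h1)
    have : Infinite (centralizer {(z₀ : G)} : Subgroup G) := Infinite.of_injective _ hinj
    exact (not_finite_iff_infinite.mpr this) (hcon (z₀ : G) hz₀2)

universe u

private lemma aux : ∀ (v : ℕ) (G : Type u) [Group G], Infinite G →
    (∀ g : G, ∃ k : ℕ, orderOf g = 2 ^ k) →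
    (∀ H : Subgroup G, Finite H → Nat.card H ≤ 2 ^ v) → False := by
  intro v
  induction v with
  | zero =>
    intro G _ hG h2 hb
    haveI := hG
    obtain ⟨x, y, hxy⟩ := exists_pair_ne G
    have hone : ∀ g : G, g = 1 := by
      intro g
      obtain ⟨k, hk⟩ := h2 g
      have hfo : IsOfFinOrder g := by
        rw [← orderOf_pos_iff, hk]; positivity
      haveI : Finite (zpowers g : Subgroup G) :=
        Set.finite_coe_iff.mpr (finite_zpowers.mpr hfo)
      have := hb (zpowers g) inferInstance
      rw [Nat.card_zpowers] at this
      simp only [pow_zero] at this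
      have : orderOf g = 1 := le_antisymm this (Nat.one_le_iff_ne_zero.mpr hfo.orderOf_pos.ne')
      exact orderOf_eq_one_iff.mp this
    exact hxy ((hone x).trans (hone y).symm)
  | succ w ih =>
    intro G _ hG h2 hb
    haveI := hG
    obtain ⟨i, hi2, hCinf⟩ := exists_inv_infinite_centralizer h2
    set C : Subgroup G := centralizer {i} with hC
    have hiC : i ∈ C := mem_centralizer_iff.mpr (by rintro x rfl; rfl)
    set ι : C := ⟨i, hiC⟩ with hι
    have hιcomm : ∀ c : C, c * ι = ι * c := by
      rintro ⟨c, hc⟩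
      have := mem_centralizer_iff.mp hc i rfl
      exact Subtype.ext this.symm
    have hι2 : orderOf ι = 2 := by
      rw [← hi2]
      exact (orderOf_injective C.subtype Subtype.coe_injective ι).symm
    set N : Subgroup C := zpowers ι with hN
    haveI hNnorm : N.Normal := by
      constructor
      intro n hn g
      have hcomm : g * n = n * g := by
        obtain ⟨m, rfl⟩ := mem_zpowers_iff.mp hn
        exact (Commute.zpow_right (hιcomm g) m).eq
      rw [hcomm, mul_assoc, mul_inv_cancel, mul_one]
      exact hn
    haveI hNfin : Finite N := by
      have hfo : IsOfFinOrder ι := by rw [← orderOf_pos_iff, hι2]; norm_num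
      exact Set.finite_coe_iff.mpr (finite_zpowers.mpr hfo)
    have hNcard : Nat.card N = 2 := by rw [hN, Nat.card_zpowers, hι2]
    -- the quotient
    haveI hCinf' : Infinite C := hCinf
    haveI hQinf : Infinite (C ⧸ N) := by
      by_contra hq
      rw [not_infinite_iff_finite] at hq
      haveI := hq
      haveI : Finite C := Finite.of_equiv _ (Subgroup.groupEquivQuotientProdSubgroup (s := N)).symm
      exact not_finite C
    have hQ2 : ∀ q : C ⧸ N, ∃ k : ℕ, orderOf q = 2 ^ k := by
      intro q
      induction q using QuotientGroup.induction_on with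
      | H g =>
        obtain ⟨k, hk⟩ := h2 (g : G)
        have hkC : orderOf g = 2 ^ k := by
          rw [← hk]; exact (orderOf_injective C.subtype Subtype.coe_injective g).symm
        have hdvd : orderOf ((g : C ⧸ N)) ∣ 2 ^ k := by
          rw [← hkC]
          exact orderOf_dvd_of_pow_eq_one (by
            rw [← QuotientGroup.mk_pow, pow_orderOf_eq_one]; rfl)
        obtain ⟨m, _, hm⟩ := (Nat.dvd_prime_pow Nat.prime_two).mp hdvd
        exact ⟨m, hm⟩
    have hQb : ∀ K : Subgroup (C ⧸ N), Finite K → Nat.card K ≤ 2 ^ w := by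
      intro K hK
      set K' : Subgroup C := K.comap (QuotientGroup.mk' N) with hK'
      have hset : (K' : Set C) = QuotientGroup.mk ⁻¹' (K : Set (C ⧸ N)) := rfl
      have e : K' ≃ (N × (K : Set (C ⧸ N))) :=
        (Equiv.setCongr hset).trans (QuotientGroup.preimageMkEquivSubgroupProdSet N K)
      haveI hKset : Finite (K : Set (C ⧸ N)) := hK
      haveI hK'fin : Finite K' := Finite.of_equiv _ e.symm
      have hcard : Nat.card K' = 2 * Nat.card K := by
        rw [Nat.card_congr e, Nat.card_prod, hNcard]
        rfl
      set M : Subgroup G := K'.map C.subtype with hM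
      haveI hMfin : Finite M := by
        rw [hM]
        have : (M : Set G) = C.subtype '' (K' : Set C) := rfl
        exact Set.finite_coe_iff.mpr (by
          rw [Subgroup.coe_map]
          exact (Set.toFinite (K' : Set C)).image _)
      have hMcard : Nat.card M = Nat.card K' :=
        (Nat.card_congr (Subgroup.equivMapOfInjective K' C.subtype Subtype.coe_injective).toEquiv).symm
      have := hb M hMfin
      rw [hMcard, hcard, pow_succ] at this
      omega
    exact ih (C ⧸ N) hQinf hQ2 hQb

/-- An infinite 2-group cannot have a uniform bound on the orders of its finite
subgroups. -/
theorem two_group_bounded_finite_subgroups_is_finite (G : Type*) [Group G]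
    (hG : Infinite G)
    (h2 : ∀ g : G, ∃ k : ℕ, orderOf g = 2 ^ k)
    (v : ℕ) (hv : 0 < v)
    (hbound : ∀ H : Subgroup G, Finite H → Nat.card H ≤ 2 ^ v) :
    False := by
  exact aux v G hG h2 hbound
end
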